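/- Let G be a mixed signed, directed graph on n vertices and let G̃ be its augmented signed graph (each directed edge (i,j) replaced by an artificial vertex t and signed edges −it, +tj). For a ∈ ℤ^n, define ã ∈ ℤ^{n+m} by extending a with zeros on artificial vertices. Then the vector-sum characterization holds: if G is connected and G̃ is not bipartite, then a ∈ ℤρ(E(G)) if and only if Σ_{i=1}^n a_i is even; if G̃ is bipartite with bipartition L̃ ∪ R̃ and L = L̃ ∩ V(G), R = R̃ ∩ V(G), then a ∈ ℤρ(E(G)) if and only if Σ_{i∈L} a_i = Σ_{j∈R} a_j. -/

import Mathlib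

open scoped BigOperators

namespace EdgeRing

/-- A signed edge on vertex set `Fin n`: endpoints `e.1`, `e.2.1` and sign `e.2.2`. -/
abbrev SEdge (n : ℕ) := Fin n × Fin n × ℤ

/-- A signed graph on `n` vertices: a set of signed edges (loops allowed, `e.1 = e.2.1`). -/
structure SGraph (n : ℕ) where
  E : Set (SEdge n)
  sgn_unit : ∀ e ∈ E, e.2.2 = 1 ∨ e.2.2 = -1

variable {n : ℕ}

/-- `ρ(±ij) = ±(e_i + e_j)` (a loop at `i` gives `±2 e_i`), integer version. -/
def rhoZ (e : SEdge n) : Fin n → ℤ :=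
  fun v => e.2.2 * ((if e.1 = v then 1 else 0) + (if e.2.1 = v then 1 else 0))

/-- real version of `rhoZ`. -/
def rhoR (e : SEdge n) : Fin n → ℝ := fun v => (rhoZ e v : ℝ)

def toR (a : Fin n → ℤ) : Fin n → ℝ := fun v => (a v : ℝ)

def SGraph.rhoZSet (G : SGraph n) : Set (Fin n → ℤ) := {x | ∃ e ∈ G.E, x = rhoZ e}

def SGraph.rhoRSet (G : SGraph n) : Set (Fin n → ℝ) := {x | ∃ e ∈ G.E, x = rhoR e}

/-- `ℤρ(E(G))`: the subgroup of `ℤ^n` generated by the edge vectors. -/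
def SGraph.lattice (G : SGraph n) : AddSubgroup (Fin n → ℤ) :=
  AddSubgroup.closure G.rhoZSet

/-- `ℤ₊ρ(E(G))`: the affine semigroup generated by the edge vectors. -/
def SGraph.sgp (G : SGraph n) : AddSubmonoid (Fin n → ℤ) :=
  AddSubmonoid.closure G.rhoZSet

/-- adjacency via an edge of `G` (symmetric by definition). -/
def SGraph.adj (G : SGraph n) (i j : Fin n) : Prop :=
  ∃ e ∈ G.E, (e.1 = i ∧ e.2.1 = j) ∨ (e.1 = j ∧ e.2.1 = i)

/-- `G` is connected: any two vertices are joined by a walk. -/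
def SGraph.Connected (G : SGraph n) : Prop :=
  ∀ i j : Fin n, Relation.ReflTransGen G.adj i j

/-- the vertex set of the connected component of `v`. -/
def SGraph.compSet (G : SGraph n) (v : Fin n) : Set (Fin n) :=
  {w | Relation.ReflTransGen G.adj v w}

/-- `C` is (the vertex set of) a component of `G`. -/
def SGraph.IsComp (G : SGraph n) (C : Set (Fin n)) : Prop :=
  ∃ v, C = G.compSet v

/-- the edge `e` is incident to the vertex set `S`. -/
def incident (e : SEdge n) (S : Set (Fin n)) : Prop := e.1 ∈ S ∨ e.2.1 ∈ S

/-- the vertex set `C` is partitioned as `L ∪ R` and every edge of `G` incident to `C`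
has one endpoint in `L` and one in `R`. -/
def SGraph.BipWith (G : SGraph n) (C L R : Set (Fin n)) : Prop :=
  C = L ∪ R ∧ Disjoint L R ∧
    ∀ e ∈ G.E, incident e C → ((e.1 ∈ L ∧ e.2.1 ∈ R) ∨ (e.1 ∈ R ∧ e.2.1 ∈ L))

/-- the vertex set `C` (e.g. a component) is bipartite in `G`. -/
def SGraph.BipOn (G : SGraph n) (C : Set (Fin n)) : Prop := ∃ L R, G.BipWith C L R

/-- `L ∪ R` is a bipartition of (all of) `G`. -/
def SGraph.IsBipartition (G : SGraph n) (L R : Set (Fin n)) : Prop :=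
  G.BipWith Set.univ L R

def SGraph.Bipartite (G : SGraph n) : Prop := ∃ L R, G.IsBipartition L R

/-- `comp G`: the number of connected components of `G`. -/
noncomputable def SGraph.comp (G : SGraph n) : ℕ := Nat.card {C : Set (Fin n) // G.IsComp C}

/-- `bicomp G`: the number of bipartite connected components of `G`. -/
noncomputable def SGraph.bicomp (G : SGraph n) : ℕ :=
  Nat.card {C : Set (Fin n) // G.IsComp C ∧ G.BipOn C}

/-- the dual vector `e_L^* - e_R^*` as an element of `ℝ^n`. -/
noncomputable def dvec (L R : Set (Fin n)) : Fin n → ℝ :=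
  fun v => Set.indicator L (fun _ => (1 : ℝ)) v - Set.indicator R (fun _ => (1 : ℝ)) v

/-- `L, R` witness the facet-subgraph condition for the bipartite component `C` of `H`:
`C = L ∪ R` is a bipartition, and every edge of `G` not in `H` is a positive edge
incident to `L` but not `R`, or a negative edge incident to `R` but not `L`. -/
def FacetWitness (G H : SGraph n) (C L R : Set (Fin n)) : Prop :=
  H.BipWith C L R ∧
    ∀ e ∈ G.E \ H.E,
      (e.2.2 = 1 ∧ incident e L ∧ ¬ incident e R) ∨
      (e.2.2 = -1 ∧ incident e R ∧ ¬ incident e L)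

/-- `H` is a facet subgraph of `G`. -/
def IsFacetSubgraph (G H : SGraph n) : Prop :=
  H.E ⊆ G.E ∧ H.bicomp = G.bicomp + 1 ∧
    ∀ C, H.IsComp C → H.BipOn C → ¬ G.IsComp C → ∃ L R, FacetWitness G H C L R

/-- the cone generated by `S`: all nonnegative real combinations. -/
def coneOf (S : Set (Fin n → ℝ)) : Set (Fin n → ℝ) :=
  {x | ∃ (t : Finset (Fin n → ℝ)) (c : (Fin n → ℝ) → ℝ),
    ↑t ⊆ S ∧ (∀ y, 0 ≤ c y) ∧ x = ∑ y ∈ t, c y • y}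

/-- the dimension of a subset of `ℝ^n`: dimension of its linear span. -/
noncomputable def sdim (S : Set (Fin n → ℝ)) : ℕ := Module.finrank ℝ (Submodule.span ℝ S)

/-- `F` is a face of the cone `C`, cut out by a supporting linear form. -/
def IsFaceOf (C F : Set (Fin n → ℝ)) : Prop :=
  ∃ σ : (Fin n → ℝ) →ₗ[ℝ] ℝ, (∀ x ∈ C, 0 ≤ σ x) ∧ F = C ∩ {x | σ x = 0}

/-- `F` is a facet of the cone `C`: a proper face of dimension `dim C - 1`. -/
def IsFacetOf (C F : Set (Fin n → ℝ)) : Prop :=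
  IsFaceOf C F ∧ F ≠ C ∧ sdim F + 1 = sdim C

/-- the subgraph of `G` consisting of the edges inside the vertex set `C`. -/
def SGraph.restrict (G : SGraph n) (C : Set (Fin n)) : SGraph n :=
  ⟨{e ∈ G.E | e.1 ∈ C}, fun e he => G.sgn_unit e he.1⟩

/-- Vitulli's criterion for Serre's `R₁` condition for the edge ring `k[G]`
(taken here as the definition of `R₁`). -/
def SerreR1 (G : SGraph n) : Prop :=
  ∀ F, IsFacetOf (coneOf G.rhoRSet) F →
    ∃ σ : (Fin n → ℝ) →ₗ[ℝ] ℝ,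
      (∀ x ∈ coneOf G.rhoRSet, 0 ≤ σ x) ∧
      F = coneOf G.rhoRSet ∩ {x | σ x = 0} ∧
      (∀ a ∈ G.lattice, ∃ z : ℤ, σ (toR a) = z) ∧
      (∃ a ∈ G.sgp, σ (toR a) = 1) ∧
      ((AddSubgroup.closure {a : Fin n → ℤ | a ∈ G.sgp ∧ toR a ∈ F} : AddSubgroup (Fin n → ℤ)) :
          Set (Fin n → ℤ)) = {a : Fin n → ℤ | a ∈ G.lattice ∧ σ (toR a) = 0}

/-! ### Mixed signed, directed graphs -/

/-- A mixed signed, directed graph: signed edges `SE` (loops allowed) and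
directed edges `DE` (no directed loops). -/
structure MGraph (n : ℕ) where
  SE : Set (SEdge n)
  DE : Set (Fin n × Fin n)
  sgn_unit : ∀ e ∈ SE, e.2.2 = 1 ∨ e.2.2 = -1
  no_dloop : ∀ e ∈ DE, e.1 ≠ e.2

/-- `ρ((i,j)) = e_j - e_i` for a directed edge. -/
def rhoD (e : Fin n × Fin n) : Fin n → ℤ :=
  fun v => (if e.2 = v then 1 else 0) - (if e.1 = v then 1 else 0)

def MGraph.rhoZSet (G : MGraph n) : Set (Fin n → ℤ) :=
  {x | ∃ e ∈ G.SE, x = rhoZ e} ∪ {x | ∃ e ∈ G.DE, x = rhoD e}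

def MGraph.rhoRSet (G : MGraph n) : Set (Fin n → ℝ) :=
  {x | ∃ a ∈ G.rhoZSet, x = toR a}

/-- `ℤρ(E(G))` for a mixed signed, directed graph. -/
def MGraph.lattice (G : MGraph n) : AddSubgroup (Fin n → ℤ) :=
  AddSubgroup.closure G.rhoZSet

def MGraph.adj (G : MGraph n) (i j : Fin n) : Prop :=
  (∃ e ∈ G.SE, (e.1 = i ∧ e.2.1 = j) ∨ (e.1 = j ∧ e.2.1 = i)) ∨
  (∃ e ∈ G.DE, (e.1 = i ∧ e.2 = j) ∨ (e.1 = j ∧ e.2 = i))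

def MGraph.Connected (G : MGraph n) : Prop :=
  ∀ i j : Fin n, Relation.ReflTransGen G.adj i j

def MGraph.compSet (G : MGraph n) (v : Fin n) : Set (Fin n) :=
  {w | Relation.ReflTransGen G.adj v w}

def MGraph.IsComp (G : MGraph n) (C : Set (Fin n)) : Prop :=
  ∃ v, C = G.compSet v

noncomputable def MGraph.comp (G : MGraph n) : ℕ := Nat.card {C : Set (Fin n) // G.IsComp C}

/-- the directed edge `e` is incident to the vertex set `S`. -/
def dincident (e : Fin n × Fin n) (S : Set (Fin n)) : Prop := e.1 ∈ S ∨ e.2 ∈ S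

/-- Bipartiteness of the augmented signed graph of `G` on the vertex set `C`,
expressed on `G` itself: `C = L ∪ R`, every signed edge incident to `C` crosses
between `L` and `R`, and every directed edge incident to `C` has both endpoints
in the same part (its artificial vertex lies on the other side). -/
def MGraph.BipWith (G : MGraph n) (C L R : Set (Fin n)) : Prop :=
  C = L ∪ R ∧ Disjoint L R ∧
    (∀ e ∈ G.SE, incident e C → ((e.1 ∈ L ∧ e.2.1 ∈ R) ∨ (e.1 ∈ R ∧ e.2.1 ∈ L))) ∧
    (∀ e ∈ G.DE, dincident e C → ((e.1 ∈ L ∧ e.2 ∈ L) ∨ (e.1 ∈ R ∧ e.2 ∈ R)))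

def MGraph.BipOn (G : MGraph n) (C : Set (Fin n)) : Prop := ∃ L R, G.BipWith C L R

def MGraph.IsBipartition (G : MGraph n) (L R : Set (Fin n)) : Prop :=
  G.BipWith Set.univ L R

def MGraph.Bipartite (G : MGraph n) : Prop := ∃ L R, G.IsBipartition L R

/-- number of components of `G` whose augmentation is bipartite. -/
noncomputable def MGraph.bicomp (G : MGraph n) : ℕ :=
  Nat.card {C : Set (Fin n) // G.IsComp C ∧ G.BipOn C}

/-- facet-subgraph witness for mixed signed, directed graphs. -/
def MFacetWitness (G H : MGraph n) (C L R : Set (Fin n)) : Prop :=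
  H.BipWith C L R ∧
    (∀ e ∈ G.SE \ H.SE,
      (e.2.2 = 1 ∧ incident e L ∧ ¬ incident e R) ∨
      (e.2.2 = -1 ∧ incident e R ∧ ¬ incident e L)) ∧
    (∀ e ∈ G.DE \ H.DE, (e.2 ∈ L ∧ e.1 ∉ L) ∨ (e.1 ∈ R ∧ e.2 ∉ R))

/-- `H` is a facet subgraph of the mixed signed, directed graph `G`. -/
def IsMFacetSubgraph (G H : MGraph n) : Prop :=
  H.SE ⊆ G.SE ∧ H.DE ⊆ G.DE ∧ H.bicomp = G.bicomp + 1 ∧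
    ∀ C, H.IsComp C → H.BipOn C → ¬ G.IsComp C → ∃ L R, MFacetWitness G H C L R

/-! Work in `Q = ℤⁿ ⧸ ℤρ(E(G))`, writing `[eᵢ]` for the class of a unit vector, so that
`[a] = ∑ aᵢ[eᵢ]`. A signed edge `ij` gives `[eⱼ] = -[eᵢ]` and a directed edge `[eⱼ] = [eᵢ]`, so in a
connected graph every `[eᵢ]` is `±[e_v]`. If `2[e_v] ≠ 0`, the sets `{i | [eᵢ] = ±[e_v]}` are the
two sides of a bipartition of the augmented graph. Hence in the non-bipartite case all `[eᵢ]`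
coincide and are killed by 2, and `[a] = (∑ aᵢ)[e_v]` vanishes when `∑ aᵢ` is even. In the
bipartite case `∑_L aᵢ - ∑_R aᵢ` vanishes on every edge vector, so it descends to `Q`; there it
fixes the signs in `[eᵢ] = ±[e_v]`, giving `±[a] = (∑_L aᵢ - ∑_R aᵢ)[e_v]`. Necessity in the
non-bipartite case is the invariance of the coordinate sum modulo 2. -/

open Matrix

section Algebra

variable {ι : Type*}

theorem mk_eq_sum_zsmul_mk_single [Fintype ι] [DecidableEq ι] (Λ : AddSubgroup (ι → ℤ))
    (a : ι → ℤ) : (a : (ι → ℤ) ⧸ Λ) = ∑ i, a i • ((Pi.single i 1 : ι → ℤ) : (ι → ℤ) ⧸ Λ) := by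
  conv_lhs => rw [← Finset.univ_sum_single a]
  simp only [← QuotientAddGroup.mk_zsmul, QuotientAddGroup.mk_sum, ← Pi.single_smul', smul_eq_mul,
    mul_one]

/-- `e_L^* - e_R^*` with integer entries (cf. `dvec`). -/
noncomputable def dvecZ (L R : Set ι) : ι → ℤ := L.indicator 1 - R.indicator 1

theorem dvecZ_of_mem_left {L R : Set ι} (h : Disjoint L R) {i : ι} (hi : i ∈ L) :
    dvecZ L R i = 1 := by
  simp [dvecZ, hi, Set.disjoint_left.1 h hi]

theorem dvecZ_of_mem_right {L R : Set ι} (h : Disjoint L R) {i : ι} (hi : i ∈ R) :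
    dvecZ L R i = -1 := by
  simp [dvecZ, hi, Set.disjoint_right.1 h hi]

theorem dvecZ_dotProduct [Fintype ι] (L R : Set ι) (a : ι → ℤ) :
    dvecZ L R ⬝ᵥ a = ∑ i, L.indicator a i - ∑ i, R.indicator a i := by
  simp only [dvecZ, dotProduct, ← Finset.sum_sub_distrib]
  refine Finset.sum_congr rfl fun i _ => ?_
  rw [Pi.sub_apply, sub_mul, ← Set.indicator_mul_left, ← Set.indicator_mul_left]
  simp only [Pi.one_apply, one_mul]

end Algebra

theorem rhoZ_eq_smul (e : SEdge n) : rhoZ e = e.2.2 • (Pi.single e.1 1 + Pi.single e.2.1 1) := by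
  ext v
  simp [rhoZ, Pi.single_apply, eq_comm]

theorem rhoD_eq_sub (e : Fin n × Fin n) : rhoD e = Pi.single e.2 1 - Pi.single e.1 1 := by
  ext v
  simp [rhoD, Pi.single_apply, eq_comm]

namespace MGraph

variable (G : MGraph n)

def vertexClass (i : Fin n) : (Fin n → ℤ) ⧸ G.lattice := (Pi.single i 1 : Fin n → ℤ)

theorem vertexClass_add_vertexClass_eq_zero {e : SEdge n} (he : e ∈ G.SE) :
    G.vertexClass e.1 + G.vertexClass e.2.1 = 0 := by
  have h := (QuotientAddGroup.eq_zero_iff (N := G.lattice) (rhoZ e)).2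
    (AddSubgroup.subset_closure (Or.inl ⟨e, he, rfl⟩))
  rw [rhoZ_eq_smul, QuotientAddGroup.mk_zsmul, QuotientAddGroup.mk_add] at h
  exact (Int.isUnit_iff.2 (G.sgn_unit e he)).smul_eq_zero.1 h

theorem vertexClass_snd_eq_fst {e : Fin n × Fin n} (he : e ∈ G.DE) :
    G.vertexClass e.2 = G.vertexClass e.1 := by
  have h := (QuotientAddGroup.eq_zero_iff (N := G.lattice) (rhoD e)).2
    (AddSubgroup.subset_closure (Or.inr ⟨e, he, rfl⟩))
  rwa [rhoD_eq_sub, QuotientAddGroup.mk_sub, sub_eq_zero] at h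

theorem dotProduct_mem_of_mem_lattice (ε : Fin n → ℤ) {H : AddSubgroup ℤ}
    (hSE : ∀ e ∈ G.SE, ε e.1 + ε e.2.1 ∈ H) (hDE : ∀ e ∈ G.DE, ε e.2 - ε e.1 ∈ H)
    {a : Fin n → ℤ} (ha : a ∈ G.lattice) : ε ⬝ᵥ a ∈ H := by
  induction ha using AddSubgroup.closure_induction with
  | mem x hx =>
    rcases hx with ⟨e, he, rfl⟩ | ⟨e, he, rfl⟩
    · rw [rhoZ_eq_smul, dotProduct_smul, dotProduct_add, dotProduct_single, dotProduct_single,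
        mul_one, mul_one]
      exact H.zsmul_mem (hSE e he) e.2.2
    · simpa [rhoD_eq_sub, dotProduct_sub] using hDE e he
  | zero => simp
  | add x y _ _ hx hy => simpa [dotProduct_add] using H.add_mem hx hy
  | neg x _ hx => simpa [dotProduct_neg] using H.neg_mem hx

theorem two_dvd_sum_of_mem_lattice {a : Fin n → ℤ} (ha : a ∈ G.lattice) : 2 ∣ ∑ i, a i := by
  rw [← one_dotProduct, ← Int.mem_zmultiples_iff]
  exact G.dotProduct_mem_of_mem_lattice 1 (fun _ _ => Int.mem_zmultiples_iff.2 (by simp))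
    (fun _ _ => Int.mem_zmultiples_iff.2 (by simp)) ha

variable {G}

theorem vertexClass_eq_or_eq_neg_of_adj {i j : Fin n} (h : G.adj i j) :
    G.vertexClass j = G.vertexClass i ∨ G.vertexClass j = -G.vertexClass i := by
  rcases h with ⟨e, he, ⟨rfl, rfl⟩ | ⟨rfl, rfl⟩⟩ | ⟨e, he, ⟨rfl, rfl⟩ | ⟨rfl, rfl⟩⟩
  · exact Or.inr (eq_neg_of_add_eq_zero_right (G.vertexClass_add_vertexClass_eq_zero he))
  · exact Or.inr (eq_neg_of_add_eq_zero_left (G.vertexClass_add_vertexClass_eq_zero he))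
  · exact Or.inl (G.vertexClass_snd_eq_fst he)
  · exact Or.inl (G.vertexClass_snd_eq_fst he).symm

theorem Connected.vertexClass_eq_or_eq_neg (hG : G.Connected) (i j : Fin n) :
    G.vertexClass j = G.vertexClass i ∨ G.vertexClass j = -G.vertexClass i := by
  induction hG i j with
  | refl => exact Or.inl rfl
  | tail _ hjk ih =>
    rcases ih with h | h <;> rcases vertexClass_eq_or_eq_neg_of_adj hjk with h' | h' <;>
      simp [h, h']

theorem Connected.isBipartition_of_two_zsmul_ne_zero (hG : G.Connected) {v : Fin n}
    (hv : (2 : ℤ) • G.vertexClass v ≠ 0) :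
    G.IsBipartition {i | G.vertexClass i = G.vertexClass v}
      {i | G.vertexClass i = -G.vertexClass v} := by
  have hne : G.vertexClass v ≠ -G.vertexClass v := fun h => hv <| by
    rw [two_zsmul]; nth_rewrite 1 [h]; exact neg_add_cancel _
  refine ⟨?_, ?_, fun e he _ => ?_, fun e he _ => ?_⟩
  · ext i
    simpa using hG.vertexClass_eq_or_eq_neg v i
  · rw [Set.disjoint_left]
    rintro i (hi : _ = _) (hi' : _ = _)
    exact hne (hi ▸ hi')
  · have h := eq_neg_of_add_eq_zero_right (G.vertexClass_add_vertexClass_eq_zero he)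
    rcases hG.vertexClass_eq_or_eq_neg v e.1 with h1 | h1
    · exact Or.inl ⟨h1, by rw [Set.mem_ofPred_eq, h, h1]⟩
    · exact Or.inr ⟨h1, by rw [Set.mem_ofPred_eq, h, h1, neg_neg]⟩
  · have h := G.vertexClass_snd_eq_fst he
    rcases hG.vertexClass_eq_or_eq_neg v e.1 with h1 | h1
    · exact Or.inl ⟨h1, by rw [Set.mem_ofPred_eq, h, h1]⟩
    · exact Or.inr ⟨h1, by rw [Set.mem_ofPred_eq, h, h1]⟩

theorem Connected.two_zsmul_vertexClass_eq_zero (hG : G.Connected) (hnb : ¬ G.Bipartite)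
    (i : Fin n) : (2 : ℤ) • G.vertexClass i = 0 := by
  by_contra h
  exact hnb ⟨_, _, hG.isBipartition_of_two_zsmul_ne_zero h⟩

theorem Connected.vertexClass_eq_of_not_bipartite (hG : G.Connected) (hnb : ¬ G.Bipartite)
    (i j : Fin n) : G.vertexClass j = G.vertexClass i := by
  have h2 := hG.two_zsmul_vertexClass_eq_zero hnb i
  rcases hG.vertexClass_eq_or_eq_neg i j with h | h
  · exact h
  · rw [h, neg_eq_of_add_eq_zero_left (two_zsmul (G.vertexClass i) ▸ h2)]

theorem Connected.mem_lattice_of_two_dvd_sum (hG : G.Connected) (hnb : ¬ G.Bipartite)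
    {a : Fin n → ℤ} (ha : 2 ∣ ∑ i, a i) : a ∈ G.lattice := by
  rcases isEmpty_or_nonempty (Fin n) with _ | ⟨⟨v⟩⟩
  · exact Subsingleton.elim a 0 ▸ G.lattice.zero_mem
  obtain ⟨k, hk⟩ := ha
  rw [← QuotientAddGroup.eq_zero_iff]
  calc (a : (Fin n → ℤ) ⧸ G.lattice) = ∑ i, a i • G.vertexClass i :=
        mk_eq_sum_zsmul_mk_single _ a
    _ = ∑ i, a i • G.vertexClass v :=
        Finset.sum_congr rfl fun i _ => by rw [hG.vertexClass_eq_of_not_bipartite hnb v i]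
    _ = (∑ i, a i) • G.vertexClass v := (Finset.sum_smul ..).symm
    _ = k • (2 : ℤ) • G.vertexClass v := by rw [hk, mul_comm, mul_zsmul]
    _ = 0 := by rw [hG.two_zsmul_vertexClass_eq_zero hnb, smul_zero]

theorem IsBipartition.isUnit_dvecZ {L R : Set (Fin n)} (hLR : G.IsBipartition L R) (i : Fin n) :
    IsUnit (dvecZ L R i) := by
  obtain ⟨hcov, hdisj, -⟩ := hLR
  rcases (hcov ▸ Set.mem_univ i : i ∈ L ∪ R) with hi | hi
  · simp [dvecZ_of_mem_left hdisj hi]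
  · simp [dvecZ_of_mem_right hdisj hi]

theorem IsBipartition.dvecZ_dotProduct_eq_zero {L R : Set (Fin n)} (hLR : G.IsBipartition L R)
    {a : Fin n → ℤ} (ha : a ∈ G.lattice) : dvecZ L R ⬝ᵥ a = 0 := by
  obtain ⟨-, hdisj, hSE, hDE⟩ := hLR
  have hL := fun {i} => dvecZ_of_mem_left (i := i) hdisj
  have hR := fun {i} => dvecZ_of_mem_right (i := i) hdisj
  refine AddSubgroup.mem_bot.1
    (G.dotProduct_mem_of_mem_lattice _ (fun e he => ?_) (fun e he => ?_) ha)
  · rcases hSE e he (Or.inl trivial) with ⟨h1, h2⟩ | ⟨h1, h2⟩ <;> simp [hL, hR, h1, h2]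
  · rcases hDE e he (Or.inl trivial) with ⟨h1, h2⟩ | ⟨h1, h2⟩ <;> simp [hL, hR, h1, h2]

theorem Connected.mem_lattice_of_dvecZ_dotProduct_eq_zero (hG : G.Connected)
    {L R : Set (Fin n)} (hLR : G.IsBipartition L R) {a : Fin n → ℤ}
    (ha : dvecZ L R ⬝ᵥ a = 0) : a ∈ G.lattice := by
  rcases isEmpty_or_nonempty (Fin n) with _ | ⟨⟨v⟩⟩
  · exact Subsingleton.elim a 0 ▸ G.lattice.zero_mem
  set ε := dvecZ L R
  let ψ := QuotientAddGroup.lift G.lattice (AddMonoidHom.mk' (ε ⬝ᵥ ·) (dotProduct_add ε))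
    fun _ hx => hLR.dvecZ_dotProduct_eq_zero hx
  have hψ : ∀ i, ψ (G.vertexClass i) = ε i := fun i =>
    (dotProduct_single ε 1 i).trans (mul_one _)
  have hcls : ∀ i, ε v • G.vertexClass i = ε i • G.vertexClass v := by
    intro i
    rcases hG.vertexClass_eq_or_eq_neg v i with h | h
    · have hε : ε i = ε v := by rw [← hψ, ← hψ, h]
      rw [h, hε]
    · have hε : ε i = -ε v := by rw [← hψ, ← hψ, h, map_neg]
      rw [h, hε, zsmul_neg, neg_zsmul]
  rw [← QuotientAddGroup.eq_zero_iff, ← (hLR.isUnit_dvecZ v).smul_eq_zero]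
  calc ε v • (a : (Fin n → ℤ) ⧸ G.lattice) = ∑ i, a i • ε v • G.vertexClass i := by
        rw [mk_eq_sum_zsmul_mk_single, ← Finset.sum_zsmul]
        exact Finset.sum_congr rfl fun i _ => zsmul_comm _ _ _
    _ = ∑ i, (ε i * a i) • G.vertexClass v := by simp_rw [hcls, smul_smul, mul_comm]
    _ = (ε ⬝ᵥ a) • G.vertexClass v := (Finset.sum_smul ..).symm
    _ = 0 := by rw [ha, zero_smul]

end MGraph

/-- lattice characterization for a connected mixed signed, directed
graph `G`: if the augmented graph is not bipartite, `a ∈ ℤρ(E(G))` iff `Σ aᵢ` is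
even; if it is bipartite with (induced) bipartition `L ∪ R` on `V(G)`, then
`a ∈ ℤρ(E(G))` iff `Σ_{i∈L} aᵢ = Σ_{j∈R} aⱼ`. -/
theorem stmt17 {n : ℕ} (G : MGraph n) (hconn : G.Connected) (a : Fin n → ℤ) :
    (¬ G.Bipartite → (a ∈ G.lattice ↔ (2 : ℤ) ∣ ∑ i, a i)) ∧
    (∀ L R : Set (Fin n), G.IsBipartition L R →
      (a ∈ G.lattice ↔ ∑ i, L.indicator a i = ∑ i, R.indicator a i)) := by
  refine ⟨fun hnb => ⟨G.two_dvd_sum_of_mem_lattice, hconn.mem_lattice_of_two_dvd_sum hnb⟩,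
    fun L R hLR => ?_⟩
  rw [← sub_eq_zero, ← dvecZ_dotProduct]
  exact ⟨hLR.dvecZ_dotProduct_eq_zero, hconn.mem_lattice_of_dvecZ_dotProduct_eq_zero hLR⟩

end EdgeRing
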